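/- Let n ≥ 2 be an integer and 0 < ε < 1/12. Let f be a function defined on a subset of ℝⁿ containing {0, e₁, e₂} with f(0) = 0, satisfying |‖f(x) − f(y)‖ − ‖x − y‖| ≤ ε for all x, y ∈ {0, e₁, e₂}, and suppose f(e₁) = (e′₁₁, 0, …, 0) and f(e₂) = (e′₂₁, e′₂₂, 0, …, 0) with e′₁₁ ≥ 0 and e′₂₂ ≥ 0. Then 1 − 2·ε ≤ e′₂₂ ≤ 1 + ε. -/

import Mathlib

/-!
Write `f e₁ = (a, 0, …)` and `f e₂ = (b, c, 0, …)`. Since `f 0 = 0`, the images of `e₁` and `e₂` are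
almost unit vectors at distance almost `√2`, and polarization makes them almost orthogonal:
`|a b| = |⟪f e₁, f e₂⟫| ≤ 4ε`. As `|a| ≥ 1 - ε`, this forces `b = O(ε)`, and then
`c² = ‖f e₂‖² - b² ≥ (1 - ε)² - b² ≥ (1 - 2ε)²` once `ε < 1/12`. The upper bound is simply
`c ≤ ‖f e₂‖ ≤ 1 + ε`.
-/

open Real

theorem abs_inner_le_of_almost_orthonormal {E : Type*} [SeminormedAddCommGroup E]
    [InnerProductSpace ℝ E] {x y : E} {ε : ℝ} (hε : ε ≤ 1) (hx : |‖x‖ - 1| ≤ ε)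
    (hy : |‖y‖ - 1| ≤ ε) (hxy : |‖x - y‖ - √2| ≤ ε) : |inner ℝ x y| ≤ 4 * ε := by
  have hpolar := norm_sub_sq_real x y
  have hs : √2 ^ 2 = 2 := sq_sqrt zero_le_two
  have hs_le : √2 ≤ 3 / 2 := by nlinarith [sqrt_nonneg 2]
  rw [abs_le] at hx hy hxy ⊢
  constructor <;> nlinarith [norm_nonneg x, norm_nonneg y, norm_nonneg (x - y)]

theorem one_sub_two_mul_le_of_abs_mul_le {ε a b c : ℝ} (hε : ε < 1 / 12) (ha : 1 - ε ≤ |a|)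
    (hab : |a * b| ≤ 4 * ε) (hbc : (1 - ε) ^ 2 ≤ b ^ 2 + c ^ 2) (hc : 0 ≤ c) :
    1 - 2 * ε ≤ c := by
  have hε0 : 0 ≤ ε := by linarith [abs_nonneg (a * b)]
  have hb : |b| ≤ 48 / 11 * ε := by
    rw [abs_mul] at hab
    nlinarith [abs_nonneg b]
  have hb2 : b ^ 2 ≤ 2 * ε - 3 * ε ^ 2 := by
    rw [← sq_abs]
    nlinarith [abs_nonneg b]
  nlinarith

namespace EuclideanSpace

theorem eq_single_of_forall_ne_apply_eq_zero {ι : Type*} [DecidableEq ι]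
    {x : EuclideanSpace ℝ ι} {i : ι} (hx : ∀ k, k ≠ i → x k = 0) : x = single i (x i) := by
  ext k
  by_cases hk : k = i
  · subst hk; simp
  · simp [hx k hk, hk]

theorem norm_sq_eq_of_forall_ne_apply_eq_zero {ι : Type*} [Fintype ι]
    {y : EuclideanSpace ℝ ι} {i j : ι} (hij : i ≠ j) (hy : ∀ k, k ≠ i → k ≠ j → y k = 0) :
    ‖y‖ ^ 2 = y i ^ 2 + y j ^ 2 := by
  rw [norm_sq_eq, Fintype.sum_eq_add i j hij fun k hk => by simp [hy k hk.1 hk.2]]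
  simp only [Real.norm_eq_abs, sq_abs]

theorem norm_single_one_sub_single_one {ι : Type*} [Fintype ι] [DecidableEq ι] {i j : ι}
    (hij : i ≠ j) : ‖single i (1 : ℝ) - single j 1‖ = √2 := by
  rw [← sqrt_sq (norm_nonneg _), norm_sub_sq_real, inner_single_left]
  simp [hij.symm]
  norm_num

theorem apply_mem_Icc_of_almost_orthonormal {ι : Type*} [Fintype ι] [DecidableEq ι] {i j : ι}
    (hij : i ≠ j) {x y : EuclideanSpace ℝ ι} {ε : ℝ} (hε : ε < 1 / 12)
    (hx : ∀ k, k ≠ i → x k = 0) (hy : ∀ k, k ≠ i → k ≠ j → y k = 0) (hyj : 0 ≤ y j)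
    (hx1 : |‖x‖ - 1| ≤ ε) (hy1 : |‖y‖ - 1| ≤ ε) (hxy : |‖x - y‖ - √2| ≤ ε) :
    y j ∈ Set.Icc (1 - 2 * ε) (1 + ε) := by
  have hx_eq := eq_single_of_forall_ne_apply_eq_zero hx
  have hinner : |x i * y i| ≤ 4 * ε := by
    have h := abs_inner_le_of_almost_orthonormal (by linarith) hx1 hy1 hxy
    rwa [hx_eq, inner_single_left, starRingEnd_apply, star_trivial] at h
  have hnorm_x : ‖x‖ = |x i| := by rw [hx_eq]; simp
  rw [abs_le] at hx1 hy1
  constructor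
  · refine one_sub_two_mul_le_of_abs_mul_le hε (by linarith) hinner ?_ hyj
    rw [← norm_sq_eq_of_forall_ne_apply_eq_zero hij hy]
    exact pow_le_pow_left₀ (by linarith) (by linarith) 2
  · calc y j ≤ ‖y‖ := (Real.le_norm_self _).trans (PiLp.norm_apply_le y j)
      _ ≤ 1 + ε := by linarith

end EuclideanSpace

/-- If `f 0 = 0`, `f` is an `ε`-isometry on `{0, e₁, e₂}` (`0 < ε < 1/12`) with
`f e₁ = (e′₁₁, 0, …, 0)`, `f e₂ = (e′₂₁, e′₂₂, 0, …, 0)`, `e′₁₁, e′₂₂ ≥ 0`, then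
`1 − 2ε ≤ e′₂₂ ≤ 1 + ε`. -/
theorem second_diagonal_bound (n : ℕ) (hn : 2 ≤ n) (ε : ℝ)
    (hε : ε < 1 / 12)
    (f : EuclideanSpace ℝ (Fin n) → EuclideanSpace ℝ (Fin n))
    (hf0 : f 0 = 0)
    (hiso : ∀ x ∈ ({0, EuclideanSpace.single ⟨0, by omega⟩ (1 : ℝ),
              EuclideanSpace.single ⟨1, by omega⟩ (1 : ℝ)} :
              Set (EuclideanSpace ℝ (Fin n))),
            ∀ y ∈ ({0, EuclideanSpace.single ⟨0, by omega⟩ (1 : ℝ),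
              EuclideanSpace.single ⟨1, by omega⟩ (1 : ℝ)} :
              Set (EuclideanSpace ℝ (Fin n))),
            |‖f x - f y‖ - ‖x - y‖| ≤ ε)
    (htri1 : ∀ j : Fin n, j ≠ ⟨0, by omega⟩ →
      f (EuclideanSpace.single ⟨0, by omega⟩ (1 : ℝ)) j = 0)
    (htri2 : ∀ j : Fin n, j ≠ ⟨0, by omega⟩ → j ≠ ⟨1, by omega⟩ →
      f (EuclideanSpace.single ⟨1, by omega⟩ (1 : ℝ)) j = 0)
    (hpos2 : 0 ≤ f (EuclideanSpace.single ⟨1, by omega⟩ (1 : ℝ)) ⟨1, by omega⟩) :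
    1 - 2 * ε ≤ f (EuclideanSpace.single ⟨1, by omega⟩ (1 : ℝ)) ⟨1, by omega⟩ ∧
    f (EuclideanSpace.single ⟨1, by omega⟩ (1 : ℝ)) ⟨1, by omega⟩ ≤ 1 + ε := by
  have hij : (⟨0, by omega⟩ : Fin n) ≠ ⟨1, by omega⟩ := by simp
  set e₁ : EuclideanSpace ℝ (Fin n) := EuclideanSpace.single ⟨0, by omega⟩ 1
  set e₂ : EuclideanSpace ℝ (Fin n) := EuclideanSpace.single ⟨1, by omega⟩ 1
  have h1 := hiso e₁ (by simp) 0 (by simp)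
  have h2 := hiso e₂ (by simp) 0 (by simp)
  have h12 := hiso e₁ (by simp) e₂ (by simp)
  have hnorm₁ : ‖e₁‖ = 1 := by simp [e₁]
  have hnorm₂ : ‖e₂‖ = 1 := by simp [e₂]
  rw [hf0, sub_zero, sub_zero, hnorm₁] at h1
  rw [hf0, sub_zero, sub_zero, hnorm₂] at h2
  rw [EuclideanSpace.norm_single_one_sub_single_one hij] at h12
  exact EuclideanSpace.apply_mem_Icc_of_almost_orthonormal hij hε htri1 htri2 hpos2 h1 h2 h12
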